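/- arXiv:2406.18727 — 2 statements merged into one kernel-verified Lean document; each statement's English description precedes it below -/
import Mathlib

section
/- Let S be a set of distributions on ℝ with finite second moments, closed under equal-weight mixtures, with Vmax = sup_{μ∈S} Var(μ) finite and positive, and suppose the demonic variance Vdem = sup_{μ₁,μ₂∈S}(1/2)(Var μ₁ + Var μ₂ + (mean μ₁ − mean μ₂)²) equals 2·Vmax. If there exist μ₁, μ₂ ∈ S attaining Vdem, then Var(μ₁) = Var(μ₂) = 0 and {mean μ₁, mean μ₂} = {inf_{μ∈S} mean μ, sup_{μ∈S} mean μ}; in particular μ₁ and μ₂ are Dirac measures at the extremal means. -/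
open MeasureTheory
open scoped ENNReal

private lemma aux_int_sq_sub (μ : Measure ℝ) [IsProbabilityMeasure μ]
    (h1 : Integrable (fun x => x) μ) (h2 : Integrable (fun x => x^2) μ) (m : ℝ) :
    Integrable (fun x => (x - m)^2) μ ∧
    ∫ x, (x - m)^2 ∂μ = (∫ x, x^2 ∂μ) - 2*m*(∫ x, x ∂μ) + m^2 := by
  have hfun : (fun x : ℝ => (x - m)^2) = fun x => x^2 - (2*m)*x + m^2 := by
    funext x; ring
  have hint2 : Integrable (fun x : ℝ => x^2 - (2*m)*x + m^2) μ :=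
    (h2.sub (h1.const_mul (2*m))).add (integrable_const _)
  constructor
  · rw [hfun]; exact hint2
  · have e1 : ∫ x, (x^2 - (2*m)*x) + m^2 ∂μ
        = (∫ x, x^2 - (2*m)*x ∂μ) + ∫ _x, m^2 ∂μ :=
      integral_add (h2.sub (h1.const_mul (2*m))) (integrable_const _)
    have e2 : ∫ x, x^2 - (2*m)*x ∂μ = (∫ x, x^2 ∂μ) - ∫ x, (2*m)*x ∂μ :=
      integral_sub h2 (h1.const_mul (2*m))
    have e3 : ∫ x, (2*m)*x ∂μ = (2*m) * ∫ x, x ∂μ := integral_const_mul _ _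
    rw [hfun, e1, e2, e3, integral_const]
    simp [measure_univ]

private lemma aux_var_nonneg (μ : Measure ℝ) [IsProbabilityMeasure μ]
    (h1 : Integrable (fun x => x) μ) (h2 : Integrable (fun x => x^2) μ) :
    0 ≤ (∫ x, x^2 ∂μ) - (∫ x, x ∂μ)^2 := by
  obtain ⟨hi, he⟩ := aux_int_sq_sub μ h1 h2 (∫ x, x ∂μ)
  have hn : 0 ≤ ∫ x, (x - ∫ y, y ∂μ)^2 ∂μ :=
    integral_nonneg (fun x => sq_nonneg _)
  nlinarith [hn, he]

private lemma aux_var_zero_dirac (μ : Measure ℝ) [IsProbabilityMeasure μ]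
    (h1 : Integrable (fun x => x) μ) (h2 : Integrable (fun x => x^2) μ)
    (hv : (∫ x, x^2 ∂μ) - (∫ x, x ∂μ)^2 = 0) :
    μ = Measure.dirac (∫ x, x ∂μ) := by
  set m := ∫ x, x ∂μ with hm
  obtain ⟨hi, he⟩ := aux_int_sq_sub μ h1 h2 m
  have hz : ∫ x, (x - m)^2 ∂μ = 0 := by rw [he]; nlinarith [hv]
  have hae : (fun x => (x - m)^2) =ᵐ[μ] 0 :=
    (integral_eq_zero_iff_of_nonneg (fun x => sq_nonneg _) hi).mp hz
  have haem : (fun x : ℝ => x) =ᵐ[μ] (fun _ => m) := by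
    filter_upwards [hae] with x hx
    have h0 : (x - m)^2 = 0 := hx
    have := sq_eq_zero_iff.mp h0
    linarith
  have hmap : μ.map (fun x : ℝ => x) = μ.map (fun _ => m) := Measure.map_congr haem
  rw [show (fun x : ℝ => x) = id from rfl, Measure.map_id, Measure.map_const] at hmap
  simpa [measure_univ] using hmap

private lemma aux_integral_mix (μ₁ μ₂ : Measure ℝ) (f : ℝ → ℝ)
    (h1 : Integrable f μ₁) (h2 : Integrable f μ₂) :
    ∫ x, f x ∂(((1:ℝ≥0∞)/2) • μ₁ + ((1:ℝ≥0∞)/2) • μ₂)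
      = (1/2) * ∫ x, f x ∂μ₁ + (1/2) * ∫ x, f x ∂μ₂ := by
  have hh : ((1:ℝ≥0∞)/2) ≠ ∞ := by simp
  rw [integral_add_measure (h1.smul_measure hh) (h2.smul_measure hh),
    integral_smul_measure, integral_smul_measure]
  norm_num [ENNReal.toReal_div]

set_option maxHeartbeats 1000000 in
theorem nds_one_attaining_pair_is_dirac_at_extremes
    (S : Set (Measure ℝ)) (hne : S.Nonempty)
    (hprob : ∀ μ ∈ S, IsProbabilityMeasure μ)
    (hint : ∀ μ ∈ S, Integrable (fun x => x) μ ∧ Integrable (fun x => x^2) μ)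
    (C : ℝ) (hbd : ∀ μ ∈ S, (∫ x, x^2 ∂μ) ≤ C)
    (hmix : ∀ μ₁ ∈ S, ∀ μ₂ ∈ S, ((1:ℝ≥0∞)/2) • μ₁ + ((1:ℝ≥0∞)/2) • μ₂ ∈ S)
    (Vmax Vdem : ℝ)
    (hVmax : Vmax = sSup ((fun μ => (∫ x, x^2 ∂μ) - (∫ x, x ∂μ)^2) '' S))
    (hVmaxPos : 0 < Vmax)
    (hVdem : Vdem = sSup {v : ℝ | ∃ μ₁ ∈ S, ∃ μ₂ ∈ S,
        v = (1/2) * (((∫ x, x^2 ∂μ₁) - (∫ x, x ∂μ₁)^2)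
              + ((∫ x, x^2 ∂μ₂) - (∫ x, x ∂μ₂)^2)
              + ((∫ x, x ∂μ₁) - (∫ x, x ∂μ₂))^2)})
    (hNDSone : Vdem = 2 * Vmax)
    (μ₁ μ₂ : Measure ℝ) (hμ₁ : μ₁ ∈ S) (hμ₂ : μ₂ ∈ S)
    (hatt : (1/2) * (((∫ x, x^2 ∂μ₁) - (∫ x, x ∂μ₁)^2)
              + ((∫ x, x^2 ∂μ₂) - (∫ x, x ∂μ₂)^2)
              + ((∫ x, x ∂μ₁) - (∫ x, x ∂μ₂))^2) = Vdem) :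
    ((∫ x, x^2 ∂μ₁) - (∫ x, x ∂μ₁)^2 = 0) ∧
    ((∫ x, x^2 ∂μ₂) - (∫ x, x ∂μ₂)^2 = 0) ∧
    ({(∫ x, x ∂μ₁), (∫ x, x ∂μ₂)} : Set ℝ)
      = {sInf ((fun μ => ∫ x, x ∂μ) '' S), sSup ((fun μ => ∫ x, x ∂μ) '' S)} ∧
    μ₁ = Measure.dirac (∫ x, x ∂μ₁) ∧ μ₂ = Measure.dirac (∫ x, x ∂μ₂) := by
  haveI i1 : IsProbabilityMeasure μ₁ := hprob μ₁ hμ₁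
  haveI i2 : IsProbabilityMeasure μ₂ := hprob μ₂ hμ₂
  obtain ⟨h11, h12⟩ := hint μ₁ hμ₁
  obtain ⟨h21, h22⟩ := hint μ₂ hμ₂
  have hVnn : ∀ μ ∈ S, 0 ≤ (∫ x, x^2 ∂μ) - (∫ x, x ∂μ)^2 := by
    intro μ hμ
    haveI := hprob μ hμ
    exact aux_var_nonneg μ (hint μ hμ).1 (hint μ hμ).2
  have hVleC : ∀ μ ∈ S, (∫ x, x^2 ∂μ) - (∫ x, x ∂μ)^2 ≤ C := by
    intro μ hμ
    have := hbd μ hμ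
    nlinarith [sq_nonneg (∫ x, x ∂μ)]
  have hMC : ∀ μ ∈ S, (∫ x, x ∂μ)^2 ≤ C := by
    intro μ hμ
    have := hVnn μ hμ
    have := hbd μ hμ
    linarith
  have hbddV : BddAbove ((fun μ => (∫ x, x^2 ∂μ) - (∫ x, x ∂μ)^2) '' S) := by
    refine ⟨C, ?_⟩
    rintro v ⟨μ, hμ, rfl⟩
    exact hVleC μ hμ
  have hVmaxUB : ∀ μ ∈ S, (∫ x, x^2 ∂μ) - (∫ x, x ∂μ)^2 ≤ Vmax := by
    intro μ hμ
    rw [hVmax]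
    exact le_csSup hbddV ⟨μ, hμ, rfl⟩
  have hDbdd : BddAbove {v : ℝ | ∃ μ₁ ∈ S, ∃ μ₂ ∈ S,
      v = (1/2) * (((∫ x, x^2 ∂μ₁) - (∫ x, x ∂μ₁)^2)
            + ((∫ x, x^2 ∂μ₂) - (∫ x, x ∂μ₂)^2)
            + ((∫ x, x ∂μ₁) - (∫ x, x ∂μ₂))^2)} := by
    refine ⟨3*C, ?_⟩
    rintro v ⟨μa, ha, μb, hb, rfl⟩
    have := hVleC μa ha
    have := hVleC μb hb
    have := hMC μa ha
    have := hMC μb hb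
    nlinarith [sq_nonneg ((∫ x, x ∂μa) + (∫ x, x ∂μb))]
  have hpair : ∀ μa ∈ S, ∀ μb ∈ S,
      (1/2) * (((∫ x, x^2 ∂μa) - (∫ x, x ∂μa)^2)
            + ((∫ x, x^2 ∂μb) - (∫ x, x ∂μb)^2)
            + ((∫ x, x ∂μa) - (∫ x, x ∂μb))^2) ≤ Vdem := by
    intro μa ha μb hb
    rw [hVdem]
    exact le_csSup hDbdd ⟨μa, ha, μb, hb, rfl⟩
  -- mixture
  have hνS := hmix μ₁ hμ₁ μ₂ hμ₂
  have hν1 : ∫ x, x ∂(((1:ℝ≥0∞)/2) • μ₁ + ((1:ℝ≥0∞)/2) • μ₂)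
      = (1/2) * (∫ x, x ∂μ₁) + (1/2) * (∫ x, x ∂μ₂) :=
    aux_integral_mix μ₁ μ₂ (fun x => x) h11 h21
  have hν2 : ∫ x, x^2 ∂(((1:ℝ≥0∞)/2) • μ₁ + ((1:ℝ≥0∞)/2) • μ₂)
      = (1/2) * (∫ x, x^2 ∂μ₁) + (1/2) * (∫ x, x^2 ∂μ₂) :=
    aux_integral_mix μ₁ μ₂ (fun x => x^2) h12 h22
  have hνle := hVmaxUB (((1:ℝ≥0∞)/2) • μ₁ + ((1:ℝ≥0∞)/2) • μ₂) hνS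
  rw [hν1, hν2] at hνle
  have hV1nn := hVnn μ₁ hμ₁
  have hV2nn := hVnn μ₂ hμ₂
  have hV1 : (∫ x, x^2 ∂μ₁) - (∫ x, x ∂μ₁)^2 = 0 := by nlinarith [hatt, hNDSone, hνle]
  have hV2 : (∫ x, x^2 ∂μ₂) - (∫ x, x ∂μ₂)^2 = 0 := by nlinarith [hatt, hNDSone, hνle]
  have hd : ((∫ x, x ∂μ₁) - (∫ x, x ∂μ₂))^2 = 4 * Vmax := by
    nlinarith [hatt, hNDSone, hνle]
  -- bounds on means
  have hb1 : ∀ μ ∈ S, ((∫ x, x ∂μ) - (∫ x, x ∂μ₁))^2 ≤ 4 * Vmax := by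
    intro μ hμ
    have h := hpair μ hμ μ₁ hμ₁
    have := hVnn μ hμ
    nlinarith [hNDSone, hV1]
  have hb2 : ∀ μ ∈ S, ((∫ x, x ∂μ) - (∫ x, x ∂μ₂))^2 ≤ 4 * Vmax := by
    intro μ hμ
    have h := hpair μ hμ μ₂ hμ₂
    have := hVnn μ hμ
    nlinarith [hNDSone, hV2]
  have hd1 : μ₁ = Measure.dirac (∫ x, x ∂μ₁) := aux_var_zero_dirac μ₁ h11 h12 hV1
  have hd2 : μ₂ = Measure.dirac (∫ x, x ∂μ₂) := aux_var_zero_dirac μ₂ h21 h22 hV2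
  refine ⟨hV1, hV2, ?_, hd1, hd2⟩
  have hneS : ((fun μ => ∫ x, x ∂μ) '' S).Nonempty := hne.image _
  rcases le_total (∫ x, x ∂μ₁) (∫ x, x ∂μ₂) with hle | hle
  · -- m₁ is the min, m₂ is the max
    have hup : ∀ μ ∈ S, (∫ x, x ∂μ) ≤ ∫ x, x ∂μ₂ := by
      intro μ hμ
      have := hb1 μ hμ
      nlinarith [hd, hle, sq_nonneg ((∫ x, x ∂μ) - ∫ x, x ∂μ₂)]
    have hlo : ∀ μ ∈ S, (∫ x, x ∂μ₁) ≤ ∫ x, x ∂μ := by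
      intro μ hμ
      have := hb2 μ hμ
      nlinarith [hd, hle, sq_nonneg ((∫ x, x ∂μ) - ∫ x, x ∂μ₁)]
    have hSup : sSup ((fun μ => ∫ x, x ∂μ) '' S) = ∫ x, x ∂μ₂ := by
      refine le_antisymm (csSup_le hneS ?_) (le_csSup ⟨∫ x, x ∂μ₂, ?_⟩ ⟨μ₂, hμ₂, rfl⟩)
      · rintro v ⟨μ, hμ, rfl⟩; exact hup μ hμ
      · rintro v ⟨μ, hμ, rfl⟩; exact hup μ hμ
    have hInf : sInf ((fun μ => ∫ x, x ∂μ) '' S) = ∫ x, x ∂μ₁ := by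
      refine le_antisymm (csInf_le ⟨∫ x, x ∂μ₁, ?_⟩ ⟨μ₁, hμ₁, rfl⟩) (le_csInf hneS ?_)
      · rintro v ⟨μ, hμ, rfl⟩; exact hlo μ hμ
      · rintro v ⟨μ, hμ, rfl⟩; exact hlo μ hμ
    rw [hInf, hSup]
  · -- m₂ is the min, m₁ is the max
    have hup : ∀ μ ∈ S, (∫ x, x ∂μ) ≤ ∫ x, x ∂μ₁ := by
      intro μ hμ
      have := hb2 μ hμ
      nlinarith [hd, hle, sq_nonneg ((∫ x, x ∂μ) - ∫ x, x ∂μ₁)]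
    have hlo : ∀ μ ∈ S, (∫ x, x ∂μ₂) ≤ ∫ x, x ∂μ := by
      intro μ hμ
      have := hb1 μ hμ
      nlinarith [hd, hle, sq_nonneg ((∫ x, x ∂μ) - ∫ x, x ∂μ₂)]
    have hSup : sSup ((fun μ => ∫ x, x ∂μ) '' S) = ∫ x, x ∂μ₁ := by
      refine le_antisymm (csSup_le hneS ?_) (le_csSup ⟨∫ x, x ∂μ₁, ?_⟩ ⟨μ₁, hμ₁, rfl⟩)
      · rintro v ⟨μ, hμ, rfl⟩; exact hup μ hμ
      · rintro v ⟨μ, hμ, rfl⟩; exact hup μ hμ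
    have hInf : sInf ((fun μ => ∫ x, x ∂μ) '' S) = ∫ x, x ∂μ₂ := by
      refine le_antisymm (csInf_le ⟨∫ x, x ∂μ₂, ?_⟩ ⟨μ₂, hμ₂, rfl⟩) (le_csInf hneS ?_)
      · rintro v ⟨μ, hμ, rfl⟩; exact hlo μ hμ
      · rintro v ⟨μ, hμ, rfl⟩; exact hlo μ hμ
    rw [hInf, hSup, Set.pair_comm]
end

section
/- Let S be a set of distributions on ℝ with uniformly bounded second moments, closed under equal-weight mixtures, with finite positive Vmax and Vdem = 2·Vmax (as defined from S). Let Emin = inf_{μ∈S} mean(μ) and Emax = sup_{μ∈S} mean(μ). Then for every ε > 0 there exist μ, ν ∈ S with mean(μ) ≤ Emin + ε and Var(μ) ≤ ε, and mean(ν) ≥ Emax − ε and Var(ν) ≤ ε. -/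
open MeasureTheory
open scoped ENNReal

lemma var_nonneg_aux (μ : Measure ℝ) [IsProbabilityMeasure μ]
    (h1 : Integrable (fun x => x) μ) (h2 : Integrable (fun x => x^2) μ) :
    (∫ x, x ∂μ)^2 ≤ ∫ x, x^2 ∂μ := by
  set m := ∫ x, x ∂μ with hm
  have h0 : 0 ≤ ∫ x, (x^2 - (2*m)*x + m^2) ∂μ :=
    integral_nonneg (fun x => by dsimp; nlinarith [sq_nonneg (x - m)])
  have e1 := integral_add (μ := μ) (f := fun x => x^2 - (2*m)*x) (g := fun _ => m^2)
    (h2.sub (h1.const_mul _)) (integrable_const _)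
  have e2 := integral_sub (μ := μ) (f := fun x => x^2) (g := fun x => (2*m)*x) h2 (h1.const_mul _)
  have e3 := integral_const_mul (μ := μ) (2*m) (fun x => x)
  have e4 : ∫ _x, m^2 ∂μ = m^2 := by simp
  nlinarith [h0, e1, e2, e3, e4]

lemma mix_integral_aux (μ₁ μ₂ : Measure ℝ) (f : ℝ → ℝ)
    (h1 : Integrable f μ₁) (h2 : Integrable f μ₂) :
    ∫ x, f x ∂(((1:ℝ≥0∞)/2) • μ₁ + ((1:ℝ≥0∞)/2) • μ₂)
      = (1/2) * (∫ x, f x ∂μ₁) + (1/2) * (∫ x, f x ∂μ₂) := by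
  have hc : ((1:ℝ≥0∞)/2) ≠ ⊤ := by simp
  rw [integral_add_measure (h1.smul_measure hc) (h2.smul_measure hc),
    integral_smul_measure, integral_smul_measure]
  norm_num [ENNReal.toReal_div]

set_option maxHeartbeats 1000000 in
theorem nds_one_near_extremal_low_variance
    (S : Set (Measure ℝ)) (hne : S.Nonempty)
    (hprob : ∀ μ ∈ S, IsProbabilityMeasure μ)
    (hint : ∀ μ ∈ S, Integrable (fun x => x) μ ∧ Integrable (fun x => x^2) μ)
    (C : ℝ) (hbd : ∀ μ ∈ S, (∫ x, x^2 ∂μ) ≤ C)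
    (hmix : ∀ μ₁ ∈ S, ∀ μ₂ ∈ S, ((1:ℝ≥0∞)/2) • μ₁ + ((1:ℝ≥0∞)/2) • μ₂ ∈ S)
    (Vmax Vdem : ℝ)
    (hVmax : Vmax = sSup ((fun μ => (∫ x, x^2 ∂μ) - (∫ x, x ∂μ)^2) '' S))
    (hVmaxPos : 0 < Vmax)
    (hVdem : Vdem = sSup {v : ℝ | ∃ μ₁ ∈ S, ∃ μ₂ ∈ S,
        v = (1/2) * (((∫ x, x^2 ∂μ₁) - (∫ x, x ∂μ₁)^2)
              + ((∫ x, x^2 ∂μ₂) - (∫ x, x ∂μ₂)^2)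
              + ((∫ x, x ∂μ₁) - (∫ x, x ∂μ₂))^2)})
    (hNDSone : Vdem = 2 * Vmax)
    (Emin Emax : ℝ)
    (hEmin : Emin = sInf ((fun μ => ∫ x, x ∂μ) '' S))
    (hEmax : Emax = sSup ((fun μ => ∫ x, x ∂μ) '' S)) :
    ∀ ε : ℝ, 0 < ε →
      (∃ μ ∈ S, (∫ x, x ∂μ) ≤ Emin + ε ∧ (∫ x, x^2 ∂μ) - (∫ x, x ∂μ)^2 ≤ ε) ∧
      (∃ ν ∈ S, Emax - ε ≤ (∫ x, x ∂ν) ∧ (∫ x, x^2 ∂ν) - (∫ x, x ∂ν)^2 ≤ ε) := by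
  intro ε hε
  -- basic facts
  have hV0 : ∀ μ ∈ S, 0 ≤ (∫ x, x^2 ∂μ) - (∫ x, x ∂μ)^2 := by
    intro μ hμ
    have := hprob μ hμ
    have h := var_nonneg_aux μ (hint μ hμ).1 (hint μ hμ).2
    linarith
  have hCnn : ∀ μ ∈ S, (∫ x, x ∂μ)^2 ≤ C := by
    intro μ hμ
    have := hV0 μ hμ
    have := hbd μ hμ
    linarith
  -- bddAbove of variance image
  have bddV : BddAbove ((fun μ => (∫ x, x^2 ∂μ) - (∫ x, x ∂μ)^2) '' S) := by
    refine ⟨C, ?_⟩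
    rintro v ⟨μ, hμ, rfl⟩
    have := hbd μ hμ
    dsimp only
    nlinarith [sq_nonneg (∫ x, x ∂μ)]
  have hVle : ∀ μ ∈ S, (∫ x, x^2 ∂μ) - (∫ x, x ∂μ)^2 ≤ Vmax := by
    intro μ hμ
    rw [hVmax]
    exact le_csSup bddV ⟨μ, hμ, rfl⟩
  -- bounds on means
  have hCnn' : 0 ≤ C := by
    obtain ⟨μ, hμ⟩ := hne
    exact le_trans (sq_nonneg _) (hCnn μ hμ)
  have hmb : ∀ μ ∈ S, -Real.sqrt C ≤ (∫ x, x ∂μ) ∧ (∫ x, x ∂μ) ≤ Real.sqrt C := by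
    intro μ hμ
    have h := hCnn μ hμ
    have h2 : |∫ x, x ∂μ| ≤ Real.sqrt C := by
      rw [← Real.sqrt_sq_eq_abs]
      exact Real.sqrt_le_sqrt h
    exact abs_le.mp h2
  have bddM : BddAbove ((fun μ => ∫ x, x ∂μ) '' S) := by
    refine ⟨Real.sqrt C, ?_⟩
    rintro v ⟨μ, hμ, rfl⟩
    exact (hmb μ hμ).2
  have bddMb : BddBelow ((fun μ => ∫ x, x ∂μ) '' S) := by
    refine ⟨-Real.sqrt C, ?_⟩
    rintro v ⟨μ, hμ, rfl⟩
    exact (hmb μ hμ).1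
  have hMne : ((fun μ => ∫ x, x ∂μ) '' S).Nonempty := hne.image _
  have hEminle : ∀ μ ∈ S, Emin ≤ ∫ x, x ∂μ := by
    intro μ hμ; rw [hEmin]; exact csInf_le bddMb ⟨μ, hμ, rfl⟩
  have hleEmax : ∀ μ ∈ S, (∫ x, x ∂μ) ≤ Emax := by
    intro μ hμ; rw [hEmax]; exact le_csSup bddM ⟨μ, hμ, rfl⟩
  -- mixture variance inequality
  have hmixV : ∀ μ₁ ∈ S, ∀ μ₂ ∈ S,
      (1/2) * (((∫ x, x^2 ∂μ₁) - (∫ x, x ∂μ₁)^2) + ((∫ x, x^2 ∂μ₂) - (∫ x, x ∂μ₂)^2))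
        + (1/4) * ((∫ x, x ∂μ₁) - (∫ x, x ∂μ₂))^2 ≤ Vmax := by
    intro μ₁ h₁ μ₂ h₂
    have hν := hmix μ₁ h₁ μ₂ h₂
    set ν := ((1:ℝ≥0∞)/2) • μ₁ + ((1:ℝ≥0∞)/2) • μ₂ with hνdef
    have e1 : ∫ x, x ∂ν = (1/2) * (∫ x, x ∂μ₁) + (1/2) * (∫ x, x ∂μ₂) :=
      mix_integral_aux μ₁ μ₂ _ (hint μ₁ h₁).1 (hint μ₂ h₂).1
    have e2 : ∫ x, x^2 ∂ν = (1/2) * (∫ x, x^2 ∂μ₁) + (1/2) * (∫ x, x^2 ∂μ₂) :=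
      mix_integral_aux μ₁ μ₂ _ (hint μ₁ h₁).2 (hint μ₂ h₂).2
    have h := hVle ν hν
    rw [e1, e2] at h
    nlinarith [h]
  -- gap bound : Emax ≤ Emin + 2 √Vmax
  have hdiff : ∀ μ₁ ∈ S, ∀ μ₂ ∈ S, (∫ x, x ∂μ₁) - (∫ x, x ∂μ₂) ≤ 2 * Real.sqrt Vmax := by
    intro μ₁ h₁ μ₂ h₂
    have h := hmixV μ₁ h₁ μ₂ h₂
    have hv1 := hV0 μ₁ h₁
    have hv2 := hV0 μ₂ h₂
    have hsq : ((∫ x, x ∂μ₁) - (∫ x, x ∂μ₂))^2 ≤ (2 * Real.sqrt Vmax)^2 := by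
      have : (2 * Real.sqrt Vmax)^2 = 4 * Vmax := by
        rw [mul_pow, Real.sq_sqrt hVmaxPos.le]; ring
      rw [this]; linarith
    have habs : |(∫ x, x ∂μ₁) - (∫ x, x ∂μ₂)| ≤ 2 * Real.sqrt Vmax := by
      have h2 := Real.sqrt_le_sqrt hsq
      rwa [Real.sqrt_sq_eq_abs, Real.sqrt_sq (by positivity)] at h2
    calc (∫ x, x ∂μ₁) - (∫ x, x ∂μ₂) ≤ |(∫ x, x ∂μ₁) - (∫ x, x ∂μ₂)| := le_abs_self _
    _ ≤ 2 * Real.sqrt Vmax := habs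
  have hgap : Emax ≤ Emin + 2 * Real.sqrt Vmax := by
    rw [hEmax]
    apply csSup_le hMne
    rintro v ⟨μ₁, h₁, rfl⟩
    have : (∫ x, x ∂μ₁) - 2 * Real.sqrt Vmax ≤ Emin := by
      rw [hEmin]
      apply le_csInf hMne
      rintro w ⟨μ₂, h₂, rfl⟩
      have := hdiff μ₁ h₁ μ₂ h₂
      linarith
    linarith
  -- choose δ
  set δ : ℝ := min (min (ε/2) ((ε/2)^2)) Vmax with hδdef
  have hδpos : 0 < δ := by
    apply lt_min (lt_min (by linarith) (by positivity)) hVmaxPos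
  have hδ1 : δ ≤ ε/2 := le_trans (min_le_left _ _) (min_le_left _ _)
  have hδ2 : δ ≤ (ε/2)^2 := le_trans (min_le_left _ _) (min_le_right _ _)
  have hδ3 : δ ≤ Vmax := min_le_right _ _
  -- find a near-optimal pair
  have hPne : {v : ℝ | ∃ μ₁ ∈ S, ∃ μ₂ ∈ S,
      v = (1/2) * (((∫ x, x^2 ∂μ₁) - (∫ x, x ∂μ₁)^2)
            + ((∫ x, x^2 ∂μ₂) - (∫ x, x ∂μ₂)^2)
            + ((∫ x, x ∂μ₁) - (∫ x, x ∂μ₂))^2)}.Nonempty := by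
    obtain ⟨μ, hμ⟩ := hne
    exact ⟨_, μ, hμ, μ, hμ, rfl⟩
  have hlt : 2 * Vmax - δ < sSup {v : ℝ | ∃ μ₁ ∈ S, ∃ μ₂ ∈ S,
      v = (1/2) * (((∫ x, x^2 ∂μ₁) - (∫ x, x ∂μ₁)^2)
            + ((∫ x, x^2 ∂μ₂) - (∫ x, x ∂μ₂)^2)
            + ((∫ x, x ∂μ₁) - (∫ x, x ∂μ₂))^2)} := by
    rw [← hVdem, hNDSone]; linarith
  obtain ⟨v, hvmem, hvgt⟩ := exists_lt_of_lt_csSup hPne hlt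
  obtain ⟨μ₁, h₁, μ₂, h₂, rfl⟩ := hvmem
  -- abbreviations
  set m₁ := ∫ x, x ∂μ₁
  set m₂ := ∫ x, x ∂μ₂
  set V₁ := (∫ x, x^2 ∂μ₁) - m₁^2 with hV₁
  set V₂ := (∫ x, x^2 ∂μ₂) - m₂^2 with hV₂
  have hv1 : 0 ≤ V₁ := hV0 μ₁ h₁
  have hv2 : 0 ≤ V₂ := hV0 μ₂ h₂
  have hkey := hmixV μ₁ h₁ μ₂ h₂
  -- small variances
  have hV1small : V₁ ≤ ε := by linarith
  have hV2small : V₂ ≤ ε := by linarith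
  -- mean separation
  have hbbig : (m₁ - m₂)^2 > 4 * (Vmax - δ) := by linarith
  have hsep : 2 * Real.sqrt (Vmax - δ) ≤ |m₁ - m₂| := by
    have h1 : Real.sqrt (4 * (Vmax - δ)) ≤ Real.sqrt ((m₁ - m₂)^2) :=
      Real.sqrt_le_sqrt hbbig.le
    rw [Real.sqrt_sq_eq_abs] at h1
    have h2 : Real.sqrt (4 * (Vmax - δ)) = 2 * Real.sqrt (Vmax - δ) := by
      rw [show (4:ℝ) * (Vmax - δ) = 2^2 * (Vmax - δ) by ring,
        Real.sqrt_mul (by positivity), Real.sqrt_sq (by norm_num)]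
    linarith [h1, h2.symm.le, h2.le]
  -- sqrt subadditivity: √Vmax ≤ √(Vmax-δ) + √δ
  have hsub : Real.sqrt Vmax ≤ Real.sqrt (Vmax - δ) + Real.sqrt δ := by
    have h1 : Real.sqrt Vmax ≤ Real.sqrt ((Real.sqrt (Vmax - δ) + Real.sqrt δ)^2) := by
      apply Real.sqrt_le_sqrt
      have e1 := Real.sq_sqrt (show (0:ℝ) ≤ Vmax - δ by linarith)
      have e2 := Real.sq_sqrt hδpos.le
      nlinarith [mul_nonneg (Real.sqrt_nonneg (Vmax - δ)) (Real.sqrt_nonneg δ)]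
    rwa [Real.sqrt_sq (by positivity)] at h1
  have hsd : Real.sqrt δ ≤ ε/2 := by
    have := Real.sqrt_le_sqrt hδ2
    rwa [Real.sqrt_sq (by linarith)] at this
  have hsep' : 2 * Real.sqrt Vmax - ε ≤ |m₁ - m₂| := by
    nlinarith [hsep, hsub, hsd]
  -- conclude
  have hE1 := hEminle μ₁ h₁
  have hE1' := hleEmax μ₁ h₁
  have hE2 := hEminle μ₂ h₂
  have hE2' := hleEmax μ₂ h₂
  rcases le_or_gt m₁ m₂ with hc | hc
  · have habs : |m₁ - m₂| = m₂ - m₁ := by rw [abs_sub_comm, abs_of_nonneg (by linarith)]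
    rw [habs] at hsep'
    exact ⟨⟨μ₁, h₁, by constructor <;> [linarith; linarith]⟩,
           ⟨μ₂, h₂, by constructor <;> [linarith; linarith]⟩⟩
  · have habs : |m₁ - m₂| = m₁ - m₂ := abs_of_nonneg (by linarith)
    rw [habs] at hsep'
    exact ⟨⟨μ₂, h₂, by constructor <;> [linarith; linarith]⟩,
           ⟨μ₁, h₁, by constructor <;> [linarith; linarith]⟩⟩
end
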